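/- Let q : (-1,1) → ℝ be continuous, q ≤ 0, even, with |q(u)| ≤ C(1-u²)^{α} for some α > 1, and set ψ(y) := -(1/2) ∫_{-1}^{1} q(u)/(1 - y u²) du and τ₀² := ψ(0). For r ≥ 0 let ν*(r) := √x where x is the unique solution of x = r² + ψ(r²/x) with x > r², and let ν*₀(r) := √(r² + τ₀²). Then for all r ≥ 0: 0 ≤ ν*(r) - ν*₀(r) ≤ (1/2) · r²/√(r² + τ₀²) ≤ r/2. -/

import Mathlib

open MeasureTheory Real

noncomputable section

/-- `ψ(y) = -(1/2) ∫_{-1}^{1} q(u)/(1 - y u²) du`. -/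
def psiFn (q : ℝ → ℝ) (y : ℝ) : ℝ :=
  -(1 / 2) * ∫ u in (-1 : ℝ)..1, q u / (1 - y * u ^ 2)

lemma denom_pos {y u : ℝ} (hy0 : 0 ≤ y) (hy1 : y < 1) (hu : u ∈ Set.Ioo (-1 : ℝ) 1) :
    0 < 1 - y * u ^ 2 ∧ 1 - y ≤ 1 - y * u ^ 2 ∧ 1 - y * u ^ 2 ≤ 1 := by
  obtain ⟨h1, h2⟩ := hu
  have hu2 : u ^ 2 ≤ 1 := by nlinarith
  have : y * u ^ 2 ≤ y := by nlinarith [sq_nonneg u]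
  refine ⟨by nlinarith, by nlinarith, by nlinarith [mul_nonneg hy0 (sq_nonneg u)]⟩

lemma psi_integrableOn (C α : ℝ) (hα : 1 < α) (q : ℝ → ℝ)
    (hcont : ContinuousOn q (Set.Ioo (-1 : ℝ) 1))
    (hbound : ∀ u ∈ Set.Ioo (-1 : ℝ) 1, |q u| ≤ C * (1 - u ^ 2) ^ α)
    {y : ℝ} (hy0 : 0 ≤ y) (hy1 : y < 1) :
    IntegrableOn (fun u => q u / (1 - y * u ^ 2)) (Set.Ioo (-1 : ℝ) 1) volume := by
  have hC : 0 ≤ C := by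
    have h0 : (0 : ℝ) ∈ Set.Ioo (-1 : ℝ) 1 := by norm_num
    have := hbound 0 h0
    simp at this
    exact le_trans (abs_nonneg _) this
  have hcf : ContinuousOn (fun u => q u / (1 - y * u ^ 2)) (Set.Ioo (-1 : ℝ) 1) := by
    apply hcont.div ((continuous_const.sub ((continuous_const.mul (continuous_pow 2)))).continuousOn)
    intro u hu
    exact ne_of_gt (denom_pos hy0 hy1 hu).1
  have hmeas : AEStronglyMeasurable (fun u => q u / (1 - y * u ^ 2))
      (volume.restrict (Set.Ioo (-1 : ℝ) 1)) :=
    hcf.aestronglyMeasurable measurableSet_Ioo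
  refine Integrable.mono' (g := fun _ => C / (1 - y)) (integrable_const _) hmeas ?_
  filter_upwards [ae_restrict_mem measurableSet_Ioo] with u hu
  obtain ⟨hd, hd1, hd2⟩ := denom_pos hy0 hy1 hu
  have hq : |q u| ≤ C := by
    have h1 : (1 - u ^ 2) ^ α ≤ 1 :=
      Real.rpow_le_one (by nlinarith [hu.1, hu.2]) (by nlinarith [hu.1, hu.2]) (by linarith)
    calc |q u| ≤ C * (1 - u ^ 2) ^ α := hbound u hu
    _ ≤ C * 1 := by nlinarith
    _ = C := by ring
  rw [Real.norm_eq_abs, abs_div]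
  rw [abs_of_pos hd]
  exact div_le_div₀ hC hq (by linarith) hd1

lemma int_mono_Ioo {f g : ℝ → ℝ}
    (hf : IntegrableOn f (Set.Ioo (-1 : ℝ) 1) volume)
    (hg : IntegrableOn g (Set.Ioo (-1 : ℝ) 1) volume)
    (h : ∀ u ∈ Set.Ioo (-1 : ℝ) 1, f u ≤ g u) :
    ∫ u in (-1 : ℝ)..1, f u ≤ ∫ u in (-1 : ℝ)..1, g u := by
  rw [intervalIntegral.integral_of_le (by norm_num), intervalIntegral.integral_of_le (by norm_num),
    integral_Ioc_eq_integral_Ioo, integral_Ioc_eq_integral_Ioo]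
  exact setIntegral_mono_on hf hg measurableSet_Ioo h

lemma psi_nonneg (C α : ℝ) (hα : 1 < α) (q : ℝ → ℝ)
    (hcont : ContinuousOn q (Set.Ioo (-1 : ℝ) 1))
    (hneg : ∀ u ∈ Set.Ioo (-1 : ℝ) 1, q u ≤ 0)
    (hbound : ∀ u ∈ Set.Ioo (-1 : ℝ) 1, |q u| ≤ C * (1 - u ^ 2) ^ α) :
    0 ≤ psiFn q 0 := by
  have h0 : IntegrableOn (fun u => q u / (1 - 0 * u ^ 2)) (Set.Ioo (-1 : ℝ) 1) volume :=
    psi_integrableOn C α hα q hcont hbound le_rfl zero_lt_one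
  have hI : ∫ u in (-1 : ℝ)..1, q u / (1 - 0 * u ^ 2) ≤ ∫ u in (-1 : ℝ)..1, (0 : ℝ) := by
    apply int_mono_Ioo h0 (integrableOn_const measure_Ioo_lt_top.ne)
    intro u hu
    have hd := (denom_pos le_rfl zero_lt_one hu).1
    exact div_nonpos_of_nonpos_of_nonneg (hneg u hu) hd.le
  simp only [intervalIntegral.integral_zero] at hI
  unfold psiFn
  linarith

lemma psi_mono (C α : ℝ) (hα : 1 < α) (q : ℝ → ℝ)
    (hcont : ContinuousOn q (Set.Ioo (-1 : ℝ) 1))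
    (hneg : ∀ u ∈ Set.Ioo (-1 : ℝ) 1, q u ≤ 0)
    (hbound : ∀ u ∈ Set.Ioo (-1 : ℝ) 1, |q u| ≤ C * (1 - u ^ 2) ^ α)
    {y : ℝ} (hy0 : 0 ≤ y) (hy1 : y < 1) :
    psiFn q 0 ≤ psiFn q y := by
  have h0 : IntegrableOn (fun u => q u / (1 - 0 * u ^ 2)) (Set.Ioo (-1 : ℝ) 1) volume :=
    psi_integrableOn C α hα q hcont hbound le_rfl zero_lt_one
  have hy : IntegrableOn (fun u => q u / (1 - y * u ^ 2)) (Set.Ioo (-1 : ℝ) 1) volume :=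
    psi_integrableOn C α hα q hcont hbound hy0 hy1
  have hI : ∫ u in (-1 : ℝ)..1, q u / (1 - y * u ^ 2)
      ≤ ∫ u in (-1 : ℝ)..1, q u / (1 - 0 * u ^ 2) := by
    apply int_mono_Ioo hy h0
    intro u hu
    obtain ⟨hd, hd1, hd2⟩ := denom_pos hy0 hy1 hu
    have hq := hneg u hu
    simp only [zero_mul, sub_zero, div_one]
    rw [div_le_iff₀ hd]
    nlinarith
  unfold psiFn
  linarith

lemma psi_key (C α : ℝ) (hα : 1 < α) (q : ℝ → ℝ)
    (hcont : ContinuousOn q (Set.Ioo (-1 : ℝ) 1))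
    (hneg : ∀ u ∈ Set.Ioo (-1 : ℝ) 1, q u ≤ 0)
    (hbound : ∀ u ∈ Set.Ioo (-1 : ℝ) 1, |q u| ≤ C * (1 - u ^ 2) ^ α)
    {y : ℝ} (hy0 : 0 ≤ y) (hy1 : y < 1) :
    psiFn q y * (1 - y) ≤ psiFn q 0 := by
  have h0 : IntegrableOn (fun u => q u / (1 - 0 * u ^ 2)) (Set.Ioo (-1 : ℝ) 1) volume :=
    psi_integrableOn C α hα q hcont hbound le_rfl zero_lt_one
  have hy : IntegrableOn (fun u => q u / (1 - y * u ^ 2)) (Set.Ioo (-1 : ℝ) 1) volume :=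
    psi_integrableOn C α hα q hcont hbound hy0 hy1
  have hI : ∫ u in (-1 : ℝ)..1, q u / (1 - 0 * u ^ 2)
      ≤ ∫ u in (-1 : ℝ)..1, (1 - y) * (q u / (1 - y * u ^ 2)) := by
    apply int_mono_Ioo h0 (hy.const_mul _)
    intro u hu
    obtain ⟨hd, hd1, hd2⟩ := denom_pos hy0 hy1 hu
    have hq := hneg u hu
    simp only [zero_mul, sub_zero, div_one]
    rw [mul_div_assoc', le_div_iff₀ hd]
    nlinarith
  rw [intervalIntegral.integral_const_mul] at hI
  unfold psiFn
  nlinarith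

/-- comparison between the exact magnetic dispersion relation
`ν*(r) = √x` (where `x > r²` solves `x = r² + ψ(r²/x)`) and the approximate one
`ν*₀(r) = √(r² + τ₀²)` with `τ₀² = ψ(0)`. -/
theorem stmt16
    (C α : ℝ) (hα : 1 < α) (q : ℝ → ℝ)
    (hcont : ContinuousOn q (Set.Ioo (-1 : ℝ) 1))
    (hneg : ∀ u ∈ Set.Ioo (-1 : ℝ) 1, q u ≤ 0)
    (heven : ∀ u ∈ Set.Ioo (-1 : ℝ) 1, q (-u) = q u)
    (hbound : ∀ u ∈ Set.Ioo (-1 : ℝ) 1, |q u| ≤ C * (1 - u ^ 2) ^ α) :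
    ∀ r : ℝ, 0 ≤ r → ∀ x : ℝ, r ^ 2 < x → x = r ^ 2 + psiFn q (r ^ 2 / x) →
      0 ≤ Real.sqrt x - Real.sqrt (r ^ 2 + psiFn q 0) ∧
      Real.sqrt x - Real.sqrt (r ^ 2 + psiFn q 0)
        ≤ (1 / 2) * (r ^ 2 / Real.sqrt (r ^ 2 + psiFn q 0)) ∧
      (1 / 2) * (r ^ 2 / Real.sqrt (r ^ 2 + psiFn q 0)) ≤ r / 2 := by
  intro r hr x hx hEq
  have hx0 : 0 < x := lt_of_le_of_lt (sq_nonneg r) hx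
  set y : ℝ := r ^ 2 / x with hy_def
  have hy0 : 0 ≤ y := div_nonneg (sq_nonneg r) hx0.le
  have hy1 : y < 1 := (div_lt_one hx0).2 hx
  have hyx : y * x = r ^ 2 := div_mul_cancel₀ _ hx0.ne'
  have hψ0 : 0 ≤ psiFn q 0 := psi_nonneg C α hα q hcont hneg hbound
  have hmono : psiFn q 0 ≤ psiFn q y := psi_mono C α hα q hcont hneg hbound hy0 hy1
  have hkey : psiFn q y * (1 - y) ≤ psiFn q 0 := psi_key C α hα q hcont hneg hbound hy0 hy1
  set b : ℝ := r ^ 2 + psiFn q 0 with hb_def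
  have hbx : b ≤ x := by rw [hEq]; linarith
  have hb0 : 0 ≤ b := add_nonneg (sq_nonneg r) hψ0
  have hsx : Real.sqrt b ≤ Real.sqrt x := Real.sqrt_le_sqrt hbx
  have hψy : psiFn q y = x - r ^ 2 := by linarith
  have hxb : x - b ≤ r ^ 2 := by nlinarith [mul_nonneg hy0 (sq_nonneg r)]
  have hrb : r ≤ Real.sqrt b := by
    calc r = Real.sqrt (r ^ 2) := (Real.sqrt_sq hr).symm
    _ ≤ Real.sqrt b := Real.sqrt_le_sqrt (by linarith)
  refine ⟨by linarith, ?_, ?_⟩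
  · rcases eq_or_lt_of_le hr with h0 | hrpos
    · have hy_eq : y = 0 := by rw [hy_def, ← h0]; simp
      have hxb' : x = b := by rw [hb_def, hEq, hy_eq]
      rw [hxb', ← h0]
      simp
    · have hbpos : 0 < b := by nlinarith
      have hsb : 0 < Real.sqrt b := Real.sqrt_pos.2 hbpos
      have hx2 := Real.sq_sqrt hx0.le
      have hb2 := Real.sq_sqrt hb0
      have hrw : (1 / 2) * (r ^ 2 / Real.sqrt b) = r ^ 2 / (2 * Real.sqrt b) := by ring
      have key : (Real.sqrt x - Real.sqrt b) * (2 * Real.sqrt b) ≤ r ^ 2 := by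
        nlinarith [sq_nonneg (Real.sqrt x - Real.sqrt b)]
      rw [hrw]
      exact (le_div_iff₀ (by positivity)).2 key
  · rcases eq_or_lt_of_le hr with h0 | hrpos
    · rw [← h0]; simp
    · have hsb : 0 < Real.sqrt b := lt_of_lt_of_le hrpos hrb
      have h1 : r ^ 2 / Real.sqrt b ≤ r := by
        rw [div_le_iff₀ hsb]; nlinarith
      linarith
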